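/- For every n ≥ 1, every probability distribution p = (p_1, ..., p_n) with p_1 ≥ ... ≥ p_n > 0 and Σ p_i = 1, every α ∈ (0, 1/2], and every integer k ≥ 1, the guessing entropy satisfies E[G(p)] ≥ (1/e)·2^{H(p) + p_n·h(α)·(1-α^k)/(1-α)} + 1/2 - p_n·α·(1-α^k)/(1-α). -/

import Mathlib

/-- Shannon entropy in bits. -/
noncomputable def shannonEntropy {n : ℕ} (p : Fin n → ℝ) : ℝ :=
  -∑ i, p i * Real.logb 2 (p i)

/-- Guessing entropy: expected number of guesses (indices counted from 1). -/
noncomputable def guessingEntropy {n : ℕ} (p : Fin n → ℝ) : ℝ :=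
  ∑ i : Fin n, (((i : ℕ) : ℝ) + 1) * p i

/-- Binary entropy function (in bits). -/
noncomputable def binaryEntropy (α : ℝ) : ℝ :=
  -α * Real.logb 2 α - (1 - α) * Real.logb 2 (1 - α)

/-
Rioul's bound `G ≥ 2^H / e + 1/2` holds for every positive distribution: Gibbs' inequality
against the weights `exp (-λ (i + 1/2))`, whose total is at most `1/λ`, gives
`H ≤ λ (G - 1/2) - ln λ` (entropy in nats), and `λ = 1 / (G - 1/2)` yields `e^H ≤ e (G - 1/2)`.
Splitting the last atom `p_n` into `(1 - α) p_n` followed by a new last atom `α p_n` raises `H` by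
`p_n h(α)` and `G` by `α p_n`. Repeating this `k` times on the newest atom (of mass `α^j p_n` at
step `j`) and applying Rioul's bound to the result gives the theorem, with
`(1 - α^k) / (1 - α) = ∑_{j<k} α^j`.
-/

open Real Finset

lemma sum_mul_log_div_le_log_sum {ι : Type*} (s : Finset ι) {q w : ι → ℝ}
    (hq : ∀ i ∈ s, 0 < q i) (hw : ∀ i ∈ s, 0 < w i) (hq1 : ∑ i ∈ s, q i = 1) :
    ∑ i ∈ s, q i * log (w i / q i) ≤ log (∑ i ∈ s, w i) := by
  have jensen := strictConcaveOn_log_Ioi.concaveOn.le_map_sum (fun i hi ↦ (hq i hi).le) hq1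
    (fun i hi ↦ div_pos (hw i hi) (hq i hi))
  have hsum : ∑ i ∈ s, q i * (w i / q i) = ∑ i ∈ s, w i :=
    sum_congr rfl fun i hi ↦ mul_div_cancel₀ _ (hq i hi).ne'
  simpa only [smul_eq_mul, hsum] using jensen

lemma sum_range_exp_neg_mul_add_half_le {l : ℝ} (hl : 0 < l) (m : ℕ) :
    ∑ i ∈ range m, exp (-(l * (i + 1 / 2))) ≤ 1 / l := by
  set r := exp (-l)
  have hr : r < 1 := exp_lt_one_iff.mpr (neg_lt_zero.mpr hl)
  have hterm (i : ℕ) : exp (-(l * (i + 1 / 2))) = exp (-(l / 2)) * r ^ i := by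
    rw [← exp_nat_mul, ← exp_add]; ring_nf
  -- `exp (-l/2) / (1 - exp (-l)) = 1 / (2 sinh (l/2))`, and `l ≤ 2 sinh (l/2)`
  have hsinh : l ≤ exp (l / 2) - exp (-(l / 2)) := by
    have := self_le_sinh_iff.mpr (half_pos hl).le
    rw [sinh_eq] at this; linarith
  have hfactor : 1 - r = exp (-(l / 2)) * (exp (l / 2) - exp (-(l / 2))) := by
    rw [mul_sub, ← exp_add, ← exp_add]; ring_nf; simp [r]
  calc ∑ i ∈ range m, exp (-(l * (i + 1 / 2)))
      = exp (-(l / 2)) * ∑ i ∈ Ico 0 m, r ^ i := by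
        rw [← range_eq_Ico, mul_sum]; exact sum_congr rfl fun i _ ↦ hterm i
    _ ≤ exp (-(l / 2)) * (r ^ 0 / (1 - r)) := by
        gcongr; exact geom_sum_Ico_le_of_lt_one (exp_pos _).le hr
    _ = 1 / (exp (l / 2) - exp (-(l / 2))) := by
        rw [hfactor, pow_zero]; field_simp
    _ ≤ 1 / l := one_div_le_one_div_of_le hl hsinh

section Distribution

variable {m : ℕ} {q : Fin m → ℝ}

lemma one_le_guessingEntropy (hq : ∀ i, 0 ≤ q i) (hq1 : ∑ i, q i = 1) :
    1 ≤ guessingEntropy q := by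
  rw [← hq1, guessingEntropy]
  exact sum_le_sum fun i _ ↦ le_mul_of_one_le_left (hq i) (by simp)

lemma neg_sum_mul_log_le_mul_guessingEntropy_sub_log (hq : ∀ i, 0 < q i)
    (hq1 : ∑ i, q i = 1) {l : ℝ} (hl : 0 < l) :
    -∑ i, q i * log (q i) ≤ l * (guessingEntropy q - 1 / 2) - log l := by
  set w : Fin m → ℝ := fun i ↦ exp (-(l * ((i : ℕ) + 1 / 2)))
  have hgibbs := sum_mul_log_div_le_log_sum univ (fun i _ ↦ hq i) (fun i _ ↦ exp_pos _) hq1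
    (w := w)
  have hlhs : ∑ i, q i * log (w i / q i)
      = -(l * (guessingEntropy q - 1 / 2)) - ∑ i, q i * log (q i) := by
    have hG : guessingEntropy q - 1 / 2 = ∑ i : Fin m, ((i : ℕ) + 1 / 2) * q i := by
      have : guessingEntropy q = ∑ i : Fin m, (((i : ℕ) + 1 / 2) * q i + 1 / 2 * q i) :=
        sum_congr rfl fun i _ ↦ by ring
      rw [this, sum_add_distrib, ← mul_sum, hq1]; ring
    rw [hG, mul_sum, ← sum_neg_distrib, ← sum_sub_distrib]
    refine sum_congr rfl fun i _ ↦ ?_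
    rw [log_div (exp_pos _).ne' (hq i).ne', log_exp]; ring
  have hrhs : log (∑ i, w i) ≤ -log l := by
    rw [← log_inv, ← one_div]
    refine log_le_log (sum_pos (fun i _ ↦ exp_pos _) ?_) ?_
    · exact nonempty_of_sum_ne_zero (by rw [hq1]; exact one_ne_zero)
    · simpa only [w, Fin.sum_univ_eq_sum_range (fun i ↦ exp (-(l * (i + 1 / 2))))]
        using sum_range_exp_neg_mul_add_half_le hl m
  linarith

theorem exp_neg_sum_mul_log_div_exp_one_add_half_le (hq : ∀ i, 0 < q i) (hq1 : ∑ i, q i = 1) :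
    exp (-∑ i, q i * log (q i)) / exp 1 + 1 / 2 ≤ guessingEntropy q := by
  set g := guessingEntropy q - 1 / 2 with hg_def
  have hg : 0 < g := by linarith [one_le_guessingEntropy (fun i ↦ (hq i).le) hq1, hg_def]
  have hH : -∑ i, q i * log (q i) ≤ log g + 1 := by
    have := neg_sum_mul_log_le_mul_guessingEntropy_sub_log hq hq1 (inv_pos.mpr hg)
    rwa [inv_mul_cancel₀ hg.ne', log_inv, sub_neg_eq_add, add_comm] at this
  have hexp : exp (-∑ i, q i * log (q i)) ≤ g * exp 1 :=
    calc _ ≤ exp (log g + 1) := exp_le_exp.mpr hH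
      _ = g * exp 1 := by rw [exp_add, exp_log hg]
  linarith [(div_le_iff₀ (exp_pos 1)).mpr hexp]

end Distribution

lemma mul_logb_mul (b x y : ℝ) :
    x * y * logb b (x * y) = y * (x * logb b x) + x * (y * logb b y) := by
  have h := negMulLog_mul x y
  simp only [negMulLog, logb] at h ⊢
  rw [← mul_div_assoc, ← mul_div_assoc, ← mul_div_assoc, ← mul_div_assoc, ← mul_div_assoc,
    ← add_div]
  congr 1
  linarith

lemma two_rpow_shannonEntropy {m : ℕ} (q : Fin m → ℝ) :
    (2 : ℝ) ^ shannonEntropy q = exp (-∑ i, q i * log (q i)) := by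
  rw [rpow_def_of_pos two_pos, shannonEntropy, mul_neg, mul_sum]
  congr 2
  refine sum_congr rfl fun i _ ↦ ?_
  rw [logb]
  field_simp

theorem rioul_guessingEntropy_lower_bound {m : ℕ} {q : Fin m → ℝ} (hq : ∀ i, 0 < q i)
    (hq1 : ∑ i, q i = 1) :
    1 / exp 1 * (2 : ℝ) ^ shannonEntropy q + 1 / 2 ≤ guessingEntropy q := by
  rw [two_rpow_shannonEntropy, one_div_mul_eq_div]
  exact exp_neg_sum_mul_log_div_exp_one_add_half_le hq hq1

def splitLast {n : ℕ} (p : Fin (n + 1) → ℝ) (α : ℝ) : Fin (n + 2) → ℝ :=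
  Fin.snoc (Function.update p (Fin.last n) ((1 - α) * p (Fin.last n))) (α * p (Fin.last n))

section SplitLast

variable {n : ℕ} (p : Fin (n + 1) → ℝ) (α : ℝ)

lemma sum_splitLast (F : ℕ → ℝ → ℝ) :
    ∑ i : Fin (n + 2), F i (splitLast p α i)
      = ∑ i : Fin (n + 1), F i (p i) - F n (p (Fin.last n))
      + F n ((1 - α) * p (Fin.last n)) + F (n + 1) (α * p (Fin.last n)) := by
  rw [Fin.sum_univ_castSucc, Fin.sum_univ_castSucc,
    Fin.sum_univ_castSucc (f := fun i ↦ F i (p i))]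
  simp [splitLast]

@[simp]
lemma splitLast_last : splitLast p α (Fin.last (n + 1)) = α * p (Fin.last n) :=
  Fin.snoc_last _ _

lemma splitLast_pos (hp : ∀ i, 0 < p i) (hα0 : 0 < α) (hα1 : α < 1) (i : Fin (n + 2)) :
    0 < splitLast p α i := by
  induction i using Fin.lastCases with
  | last => simpa using mul_pos hα0 (hp _)
  | cast j =>
    simp only [splitLast, Fin.snoc_castSucc, Function.update_apply]
    split_ifs
    · exact mul_pos (by linarith) (hp _)
    · exact hp j

lemma sum_splitLast_eq : ∑ i, splitLast p α i = ∑ i, p i := by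
  rw [sum_splitLast p α (fun _ x ↦ x)]; ring

lemma guessingEntropy_splitLast :
    guessingEntropy (splitLast p α) = guessingEntropy p + α * p (Fin.last n) := by
  simp only [guessingEntropy]
  rw [sum_splitLast p α (fun i x ↦ ((i : ℝ) + 1) * x)]
  push_cast; ring

lemma shannonEntropy_splitLast :
    shannonEntropy (splitLast p α) = shannonEntropy p + p (Fin.last n) * binaryEntropy α := by
  simp only [shannonEntropy]
  rw [sum_splitLast p α (fun _ x ↦ x * logb 2 x), mul_logb_mul, mul_logb_mul, binaryEntropy]
  ring

end SplitLast

theorem rioul_lower_bound_of_splits (k : ℕ) {n : ℕ} {p : Fin (n + 1) → ℝ}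
    (hp : ∀ i, 0 < p i) (hp1 : ∑ i, p i = 1) {α : ℝ} (hα0 : 0 < α) (hα1 : α < 1) :
    1 / exp 1 * (2 : ℝ) ^ (shannonEntropy p
        + p (Fin.last n) * binaryEntropy α * ∑ j ∈ range k, α ^ j)
      + 1 / 2 - p (Fin.last n) * α * ∑ j ∈ range k, α ^ j ≤ guessingEntropy p := by
  induction k generalizing n p with
  | zero => simpa using rioul_guessingEntropy_lower_bound hp hp1
  | succ k ih =>
    have hsplit := ih (splitLast_pos p α hp hα0 hα1) (by rw [sum_splitLast_eq, hp1])
    rw [splitLast_last, shannonEntropy_splitLast, guessingEntropy_splitLast] at hsplit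
    have hexponent :
        shannonEntropy p + p (Fin.last n) * binaryEntropy α * ∑ j ∈ range (k + 1), α ^ j
          = shannonEntropy p + p (Fin.last n) * binaryEntropy α
            + α * p (Fin.last n) * binaryEntropy α * ∑ j ∈ range k, α ^ j := by
      rw [geom_sum_succ]; ring
    rw [hexponent, geom_sum_succ]
    linarith

theorem refined_rioul_k_splits (n : ℕ) (hn : 1 ≤ n) (p : Fin n → ℝ)
    (hpos : ∀ i, 0 < p i)
    (hsum : ∑ i, p i = 1)
    (α : ℝ) (hα0 : 0 < α) (hα : α ≤ 1/2)
    (k : ℕ) :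
    guessingEntropy p ≥
      (1 / Real.exp 1) *
          (2 : ℝ) ^ (shannonEntropy p +
            p ⟨n - 1, by omega⟩ * binaryEntropy α * (1 - α ^ k) / (1 - α)) +
        1 / 2 - p ⟨n - 1, by omega⟩ * α * (1 - α ^ k) / (1 - α) := by
  obtain ⟨m, rfl⟩ : ∃ m, n = m + 1 := ⟨n - 1, by omega⟩
  have hα1 : α < 1 := by linarith
  have hgeom : (1 - α ^ k) / (1 - α) = ∑ j ∈ range k, α ^ j := by
    rw [geom_sum_eq hα1.ne, ← neg_div_neg_eq, neg_sub, neg_sub]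
  simp only [mul_div_assoc, hgeom]
  exact rioul_lower_bound_of_splits k hpos hsum hα0 hα1
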